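/- Applying the two-qubit phase flip U (|00⟩ ↦ -|00⟩, fixing |01⟩,|10⟩,|11⟩) to the X₁,X₂ registers of the state u⊗u, where u = (|00⟩+|11⟩)/√2 on (X,Z), yields a state on which the measurement {P₀,P₁}⊗{P₀,P₁} (with P₁ = vv*, v = cos(π/8)|00⟩+sin(π/8)|11⟩) produces outcome (0,0) with probability 0 and outcomes (0,1) and (1,0) each with probability 1/2. -/

import Mathlib

open Matrix
open scoped Kronecker ComplexOrder

noncomputable section

/-- `Φ ⊗ id` : apply a linear map `Φ` on `L(X)` to the first tensor factor of `L(X ⊗ Z)`. -/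
def lmapTensorId {n m k : Type*} [Fintype n] [Fintype k]
    (Φ : Matrix n n ℂ →ₗ[ℂ] Matrix m m ℂ)
    (M : Matrix (n × k) (n × k) ℂ) : Matrix (m × k) (m × k) ℂ :=
  fun p q => Φ (fun i j => M (i, p.2) (j, q.2)) p.1 q.1

/-- `id ⊗ Ψ` : apply a linear map `Ψ` on `L(Z)` to the second tensor factor of `L(Y ⊗ Z)`. -/
def idTensorLmap {n k l : Type*} [Fintype n] [Fintype k]
    (Ψ : Matrix k k ℂ →ₗ[ℂ] Matrix l l ℂ)
    (M : Matrix (n × k) (n × k) ℂ) : Matrix (n × l) (n × l) ℂ :=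
  fun p q => Ψ (fun a b => M (p.1, a) (q.1, b)) p.2 q.2

/-- Complete positivity: `Φ ⊗ id_k` maps positive semidefinite operators to positive
semidefinite operators for every finite-dimensional ancilla `k`. -/
def IsCompletelyPositive {n m : Type*} [Fintype n] [Fintype m]
    (Φ : Matrix n n ℂ →ₗ[ℂ] Matrix m m ℂ) : Prop :=
  ∀ (k : Type) [Fintype k] [DecidableEq k],
    ∀ M : Matrix (n × k) (n × k) ℂ, M.PosSemidef → (lmapTensorId Φ M).PosSemidef

def IsTracePreserving {n m : Type*} [Fintype n] [Fintype m]
    (Φ : Matrix n n ℂ →ₗ[ℂ] Matrix m m ℂ) : Prop :=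
  ∀ M : Matrix n n ℂ, (Φ M).trace = M.trace

/-- Partial trace over the first tensor factor. -/
def trFst {n k : Type*} [Fintype n] (M : Matrix (n × k) (n × k) ℂ) : Matrix k k ℂ :=
  fun a b => ∑ i : n, M (i, a) (i, b)

/-- Partial trace over the second tensor factor. -/
def trSnd {n k : Type*} [Fintype k] (M : Matrix (n × k) (n × k) ℂ) : Matrix n n ℂ :=
  fun i j => ∑ a : k, M (i, a) (j, a)

/-- Hilbert-Schmidt inner product `⟨A, B⟩ = Tr(A* B)`. -/
def minner {n : Type*} [Fintype n] (A B : Matrix n n ℂ) : ℂ := (Aᴴ * B).trace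

/-- The square root of a positive semidefinite matrix, as `Matrix.PosSemidef.sqrt` was defined
in Mathlib (December 2024); it has since been removed from Mathlib. -/
def Matrix.PosSemidef.sqrt {n : Type*} [Fintype n] [DecidableEq n] {𝕜 : Type*} [RCLike 𝕜]
    {A : Matrix n n 𝕜} (hA : A.PosSemidef) : Matrix n n 𝕜 :=
  hA.1.eigenvectorUnitary.1 * diagonal ((↑) ∘ (√·) ∘ hA.1.eigenvalues) *
    (star hA.1.eigenvectorUnitary : Matrix n n 𝕜)

open Classical in
/-- Square root of a positive semidefinite matrix (junk value `0` otherwise). -/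
def msqrt {n : Type*} [Fintype n] [DecidableEq n] (M : Matrix n n ℂ) : Matrix n n ℂ :=
  if h : M.PosSemidef then h.sqrt else 0

/-- Trace norm `‖M‖₁ = Tr √(M* M)`. -/
def traceNorm {n : Type*} [Fintype n] [DecidableEq n] (M : Matrix n n ℂ) : ℝ :=
  ((Matrix.posSemidef_conjTranspose_mul_self M).sqrt.trace).re

/-- Fidelity `F(Q, R) = ‖√Q √R‖₁` of positive semidefinite matrices. -/
def fid {n : Type*} [Fintype n] [DecidableEq n] (Q R : Matrix n n ℂ) : ℝ :=
  traceNorm (msqrt Q * msqrt R)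

/-- Choi-Jamiolkowski operator `J(Φ) = Σ_{i,j} Φ(|i⟩⟨j|) ⊗ |i⟩⟨j|`. -/
def choi {n m : Type*} [Fintype n] [DecidableEq n] [Fintype m]
    (Φ : Matrix n n ℂ →ₗ[ℂ] Matrix m m ℂ) : Matrix (m × n) (m × n) ℂ :=
  fun p q => Φ (Matrix.single p.2 q.2 1) p.1 q.1

/-- Tensor product of vectors. -/
def tensorVec {α β : Type*} (v : α → ℂ) (w : β → ℂ) : α × β → ℂ := fun p => v p.1 * w p.2

/-- `u = (|00⟩ + |11⟩)/√2`. -/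
def uVec : Fin 2 × Fin 2 → ℂ := fun p =>
  if p = (0, 0) then (Real.sqrt 2 : ℂ)⁻¹ else if p = (1, 1) then (Real.sqrt 2 : ℂ)⁻¹ else 0

/-- `v = cos(π/8)|00⟩ + sin(π/8)|11⟩`. -/
def vVec : Fin 2 × Fin 2 → ℂ := fun p =>
  if p = (0, 0) then (Real.cos (Real.pi / 8) : ℂ)
  else if p = (1, 1) then (Real.sin (Real.pi / 8) : ℂ) else 0

/-- `w = -sin(π/8)|00⟩ + cos(π/8)|11⟩`. -/
def wVec : Fin 2 × Fin 2 → ℂ := fun p =>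
  if p = (0, 0) then -(Real.sin (Real.pi / 8) : ℂ)
  else if p = (1, 1) then (Real.cos (Real.pi / 8) : ℂ) else 0

/-!
On span{|00⟩, |11⟩} the vectors `v`, `w` are the computational basis rotated by `π/8`, and
`P₀ = ww* + |01⟩⟨01| + |10⟩⟨10|`. The final state
`ξ = ½(−|00⟩|00⟩ + |00⟩|11⟩ + |11⟩|00⟩ + |11⟩|11⟩)` lies in span{|00⟩, |11⟩}^⊗2, so each outcome
probability is `|⟨a ⊗ b, ξ⟩|²` for a single pair `a, b ∈ {v, w}`. By the double-angle formulas
these amplitudes are `(cos(π/4) − sin(π/4))/2 = 0` for `w ⊗ w` and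
`(cos(π/4) + sin(π/4))/2 = 1/√2` for `w ⊗ v` and `v ⊗ w`.
-/

lemma minner_add_left {n : Type*} [Fintype n] (A B C : Matrix n n ℂ) :
    minner (A + B) C = minner A C + minner B C := by
  simp only [minner, conjTranspose_add, add_mul, trace_add]

lemma minner_vecMulVec_vecMulVec {n : Type*} [Fintype n] (a x : n → ℂ) :
    minner (vecMulVec a (star a)) (vecMulVec x (star x)) = Complex.normSq (star a ⬝ᵥ x) := by
  rw [← Complex.mul_conj, minner, conjTranspose_vecMulVec, star_star, vecMulVec_mul_vecMulVec,
    trace_vecMulVec, dotProduct_smul, smul_eq_mul, dotProduct_star, dotProduct_comm x,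
    Complex.star_def]

lemma star_tensorVec {α β : Type*} (v : α → ℂ) (w : β → ℂ) :
    star (tensorVec v w) = tensorVec (star v) (star w) := by
  ext p; simp [tensorVec]

lemma vecMulVec_kronecker_vecMulVec {α β γ δ : Type*} (a : α → ℂ) (a' : β → ℂ) (b : γ → ℂ)
    (b' : δ → ℂ) :
    vecMulVec a a' ⊗ₖ vecMulVec b b' = vecMulVec (tensorVec a b) (tensorVec a' b') := by
  ext p q; simp only [kroneckerMap_apply, vecMulVec_apply, tensorVec]; ring

lemma minner_kronecker_vecMulVec {α β : Type*} [Fintype α] [Fintype β] (a : α → ℂ) (b : β → ℂ)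
    (x : α × β → ℂ) :
    minner (vecMulVec a (star a) ⊗ₖ vecMulVec b (star b)) (vecMulVec x (star x))
      = Complex.normSq (star (tensorVec a b) ⬝ᵥ x) := by
  rw [vecMulVec_kronecker_vecMulVec, ← star_tensorVec, minner_vecMulVec_vecMulVec]

def e01 : Fin 2 × Fin 2 → ℂ := Pi.single (0, 1) 1
def e10 : Fin 2 × Fin 2 → ℂ := Pi.single (1, 0) 1

lemma one_sub_vecMulVec_vVec :
    1 - vecMulVec vVec (star vVec)
      = vecMulVec wVec (star wVec) + vecMulVec e01 (star e01) + vecMulVec e10 (star e10) := by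
  have h := Real.cos_sq_add_sin_sq (Real.pi / 8)
  unfold vVec wVec
  generalize Real.cos (Real.pi / 8) = c, Real.sin (Real.pi / 8) = s at h ⊢
  have h : (c : ℂ) * c = 1 - s * s := by
    rw [eq_sub_iff_add_eq, ← sq, ← sq]; exact_mod_cast h
  ext ⟨i, j⟩ ⟨k, l⟩
  fin_cases i <;> fin_cases j <;> fin_cases k <;> fin_cases l <;>
    simp [vecMulVec_apply, one_apply, e01, e10, Complex.conj_ofReal, h, mul_comm]

def phaseFlippedState : (Fin 2 × Fin 2) × (Fin 2 × Fin 2) → ℂ := fun p =>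
  (if p.1.1 = 0 ∧ p.2.1 = 0 then (-1 : ℂ) else 1) * tensorVec uVec uVec p

def amplitude (a b : Fin 2 × Fin 2 → ℂ) : ℂ := star (tensorVec a b) ⬝ᵥ phaseFlippedState

lemma minner_kronecker_phaseFlippedState (a b : Fin 2 × Fin 2 → ℂ) :
    minner (vecMulVec a (star a) ⊗ₖ vecMulVec b (star b))
        (vecMulVec phaseFlippedState (star phaseFlippedState))
      = Complex.normSq (amplitude a b) :=
  minner_kronecker_vecMulVec a b _

open ComplexConjugate in
lemma amplitude_eq (a b : Fin 2 × Fin 2 → ℂ) :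
    amplitude a b = (-(conj (a (0, 0)) * conj (b (0, 0))) + conj (a (0, 0)) * conj (b (1, 1))
      + conj (a (1, 1)) * conj (b (0, 0)) + conj (a (1, 1)) * conj (b (1, 1))) / 2 := by
  have h : ((√2 : ℝ) : ℂ)⁻¹ ^ 2 = 1 / 2 := by
    rw [inv_pow, ← Complex.ofReal_pow, Real.sq_sqrt zero_le_two]; norm_num
  simp only [amplitude, dotProduct, Pi.star_apply, tensorVec, star_mul', RCLike.star_def,
    phaseFlippedState, uVec, mul_ite, ite_mul, zero_mul, mul_zero, neg_mul, one_mul, mul_neg,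
    Fintype.sum_prod_type, Prod.mk.injEq, Fin.sum_univ_two, and_true, zero_ne_one, and_false,
    ↓reduceIte, one_ne_zero, add_zero, zero_add]
  linear_combination (-(conj (a (0, 0)) * conj (b (0, 0))) + conj (a (0, 0)) * conj (b (1, 1))
      + conj (a (1, 1)) * conj (b (0, 0)) + conj (a (1, 1)) * conj (b (1, 1))) * h

lemma ofReal_cos_sq_sub_sin_sq_pi_div_eight :
    (Real.cos (Real.pi / 8) : ℂ) ^ 2 - (Real.sin (Real.pi / 8) : ℂ) ^ 2 = √2 / 2 := by
  have h : Real.cos (Real.pi / 8) ^ 2 - Real.sin (Real.pi / 8) ^ 2 = √2 / 2 := by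
    rw [← Real.cos_two_mul', ← Real.cos_pi_div_four]; ring_nf
  exact_mod_cast h

lemma ofReal_two_mul_sin_mul_cos_pi_div_eight :
    2 * (Real.sin (Real.pi / 8) : ℂ) * (Real.cos (Real.pi / 8) : ℂ) = √2 / 2 := by
  have h : 2 * Real.sin (Real.pi / 8) * Real.cos (Real.pi / 8) = √2 / 2 := by
    rw [← Real.sin_two_mul, ← Real.sin_pi_div_four]; ring_nf
  exact_mod_cast h

lemma amplitude_wVec_wVec : amplitude wVec wVec = 0 := by
  simp only [amplitude_eq, wVec, ↓reduceIte, Prod.mk.injEq, Fin.reduceEq, and_false,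
    Complex.conj_ofReal, map_neg]
  linear_combination
    (ofReal_cos_sq_sub_sin_sq_pi_div_eight - ofReal_two_mul_sin_mul_cos_pi_div_eight) / 2

lemma amplitude_wVec_vVec : amplitude wVec vVec = √2 / 2 := by
  simp only [amplitude_eq, wVec, vVec, ↓reduceIte, Prod.mk.injEq, Fin.reduceEq, and_false,
    Complex.conj_ofReal, map_neg]
  linear_combination
    (ofReal_cos_sq_sub_sin_sq_pi_div_eight + ofReal_two_mul_sin_mul_cos_pi_div_eight) / 2

lemma amplitude_vVec_wVec : amplitude vVec wVec = √2 / 2 := by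
  simp only [amplitude_eq, wVec, vVec, ↓reduceIte, Prod.mk.injEq, Fin.reduceEq, and_false,
    Complex.conj_ofReal, map_neg]
  linear_combination
    (ofReal_cos_sq_sub_sin_sq_pi_div_eight + ofReal_two_mul_sin_mul_cos_pi_div_eight) / 2

lemma amplitude_eq_zero_of_left {a : Fin 2 × Fin 2 → ℂ} (h₀ : a (0, 0) = 0) (h₁ : a (1, 1) = 0)
    (b : Fin 2 × Fin 2 → ℂ) : amplitude a b = 0 := by
  simp [amplitude_eq, h₀, h₁]

lemma amplitude_eq_zero_of_right (a : Fin 2 × Fin 2 → ℂ) {b : Fin 2 × Fin 2 → ℂ}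
    (h₀ : b (0, 0) = 0) (h₁ : b (1, 1) = 0) : amplitude a b = 0 := by
  simp [amplitude_eq, h₀, h₁]

/-- Applying the phase flip `|00⟩ ↦ -|00⟩` on the `X₁, X₂` registers of `u ⊗ u` yields a state
on which the product measurement `{P₀, P₁} ⊗ {P₀, P₁}` (with `P₁ = vv*`) gives outcome
`(0,0)` with probability `0` and each of `(0,1)` and `(1,0)` with probability `1/2`. -/
theorem stmt4 :
    let P₁ : Matrix (Fin 2 × Fin 2) (Fin 2 × Fin 2) ℂ := vecMulVec vVec (star vVec)
    let P₀ : Matrix (Fin 2 × Fin 2) (Fin 2 × Fin 2) ℂ := 1 - P₁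
    -- final state vector: phase flip on the pair of `X` registers applied to `u ⊗ u`
    let ξ : (Fin 2 × Fin 2) × (Fin 2 × Fin 2) → ℂ := fun p =>
      (if p.1.1 = 0 ∧ p.2.1 = 0 then (-1 : ℂ) else 1) * tensorVec uVec uVec p
    minner (P₀ ⊗ₖ P₀) (vecMulVec ξ (star ξ)) = 0 ∧
      minner (P₀ ⊗ₖ P₁) (vecMulVec ξ (star ξ)) = 1 / 2 ∧
      minner (P₁ ⊗ₖ P₀) (vecMulVec ξ (star ξ)) = 1 / 2 := by
  intro P₁ P₀ ξ
  have hP₀ : P₀ = vecMulVec wVec (star wVec) + vecMulVec e01 (star e01)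
      + vecMulVec e10 (star e10) := one_sub_vecMulVec_vVec
  have hξ : ξ = phaseFlippedState := rfl
  simp only [hP₀, hξ, P₁, add_kronecker, kronecker_add, minner_add_left,
    minner_kronecker_phaseFlippedState, amplitude_wVec_wVec, amplitude_wVec_vVec,
    amplitude_vVec_wVec]
  simp [amplitude_eq_zero_of_left, amplitude_eq_zero_of_right, e01, e10]

end
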